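/- arXiv:0907.1561 — 6 statements merged into one kernel-verified Lean document; each statement's English description precedes it below -/
import Mathlib

section
/- Fix N ≥ 1, lengths τ_1,…,τ_N > 0, continuous potentials q_j : [0,τ_j] → ℝ, a real number λ > 0, and h ∈ ℝ. Let φ_j(·,λ) be the Neumann fundamental solution on branch j, and define Φ(λ) = ∏_{j=1}^N φ_j(0,λ) and Ψ(λ) = Σ_{j=1}^N φ_j'(0,λ) ∏_{k≠j} φ_k(0,λ). Then the following are equivalent: (i) there exist twice continuously differentiable functions y_j : [0,τ_j] → ℝ, not all identically zero, such that −y_j'' + q_j y_j = λ² y_j on [0,τ_j], y_j'(τ_j) = 0 for all j, y_1(0) = y_2(0) = ⋯ = y_N(0), and Σ_{j=1}^N y_j'(0) = h y_1(0); (ii) Ψ(λ) = h Φ(λ). -/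
/-- `φ` is the Neumann fundamental solution on `[0,τ]` for potential `q` at frequency `ω`:
it solves `−φ'' + q φ = ω² φ` on `[0,τ]` with terminal conditions `φ(τ) = 1`, `φ'(τ) = 0`. -/
def NeumannFS (τ : ℝ) (q : ℝ → ℝ) (ω : ℝ) (φ : ℝ → ℝ) : Prop :=
  ContDiff ℝ 2 φ ∧
  (∀ x ∈ Set.Icc 0 τ, -(deriv (deriv φ) x) + q x * φ x = ω ^ 2 * φ x) ∧
  φ τ = 1 ∧ deriv φ τ = 0

/-! By uniqueness for the Cauchy problem, a solution on branch `j` with `y_j'(τ_j) = 0` is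
`a_j φ_j` with `a_j = y_j(τ_j)`, and `φ_j(0)`, `φ_j'(0)` never vanish together. Condition (i) thus
becomes linear algebra: a nonzero `a` with `a_j φ_j(0) = v` for all `j` and
`∑ a_j φ_j'(0) = h v`. Since `a_j Φ = v ∏_{k ≠ j} φ_k(0)`, such an `a` satisfies
`v (Ψ - h Φ) = 0`, which settles the case `v ≠ 0`; when `v = 0` some `φ_j(0)` vanishes, and a
single zero is incompatible with (i) and (ii) alike, while two zeros make both hold. -/

open Set

theorem ContDiff.hasDerivAt_prodMk_deriv {f : ℝ → ℝ} (hf : ContDiff ℝ 2 f) (x : ℝ) :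
    HasDerivAt (fun t => (f t, deriv f t)) (deriv f x, deriv (deriv f) x) x :=
  (hf.differentiable two_ne_zero x).hasDerivAt.prodMk
    (hf.differentiable_deriv_two x).hasDerivAt

theorem eqOn_of_deriv_deriv_eq_mul {a b c : ℝ} {r f g : ℝ → ℝ}
    (hr : ContinuousOn r (Icc a b)) (hf : ContDiff ℝ 2 f) (hg : ContDiff ℝ 2 g)
    (hfr : ∀ x ∈ Icc a b, deriv (deriv f) x = r x * f x)
    (hgr : ∀ x ∈ Icc a b, deriv (deriv g) x = r x * g x)
    (hc : c ∈ Icc a b) (h₀ : f c = g c) (h₁ : deriv f c = deriv g c) :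
    EqOn (fun x => (f x, deriv f x)) (fun x => (g x, deriv g x)) (Icc a b) := by
  obtain ⟨C, hC⟩ := isCompact_Icc.exists_bound_of_continuousOn hr
  set v : ℝ → ℝ × ℝ → ℝ × ℝ := fun t p => (p.2, r t • p.1)
  have hv : ∀ t ∈ Icc a b, LipschitzOnWith (max 1 C.toNNReal) (v t) univ := fun t ht =>
    (LipschitzWith.prod_snd.prodMk (((lipschitzWith_smul (r t)).comp
      LipschitzWith.prod_fst).weaken (by
        rw [mul_one, Real.le_toNNReal_iff_coe_le ((norm_nonneg _).trans (hC t ht))]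
        exact hC t ht))).lipschitzOnWith
  have hsol : ∀ u : ℝ → ℝ, ContDiff ℝ 2 u → (∀ x ∈ Icc a b, deriv (deriv u) x = r x * u x) →
      ∀ t ∈ Icc a b, HasDerivAt (fun x => (u x, deriv u x)) (v t (u t, deriv u t)) t :=
    fun u hu hur t ht => by simpa [v, hur t ht] using hu.hasDerivAt_prodMk_deriv t
  have hcont : ∀ u : ℝ → ℝ, ContDiff ℝ 2 u → Continuous fun x => (u x, deriv u x) :=
    fun u hu => hu.continuous.prodMk (hu.continuous_deriv one_le_two)
  rw [← Icc_union_Icc_eq_Icc hc.1 hc.2]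
  refine EqOn.union ?_ ?_
  · have hsub : Ioc a c ⊆ Icc a b := fun t ht => ⟨ht.1.le, ht.2.trans hc.2⟩
    exact ODE_solution_unique_of_mem_Icc_left (fun t ht => hv t (hsub ht))
      (hcont f hf).continuousOn (fun t ht => (hsol f hf hfr t (hsub ht)).hasDerivWithinAt)
      (fun _ _ => mem_univ _)
      (hcont g hg).continuousOn (fun t ht => (hsol g hg hgr t (hsub ht)).hasDerivWithinAt)
      (fun _ _ => mem_univ _) (Prod.ext h₀ h₁)
  · have hsub : Ico c b ⊆ Icc a b := fun t ht => ⟨hc.1.trans ht.1, ht.2.le⟩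
    exact ODE_solution_unique_of_mem_Icc_right (fun t ht => hv t (hsub ht))
      (hcont f hf).continuousOn (fun t ht => (hsol f hf hfr t (hsub ht)).hasDerivWithinAt)
      (fun _ _ => mem_univ _)
      (hcont g hg).continuousOn (fun t ht => (hsol g hg hgr t (hsub ht)).hasDerivWithinAt)
      (fun _ _ => mem_univ _) (Prod.ext h₀ h₁)

def SolvesSchrodingerOn (s : Set ℝ) (q : ℝ → ℝ) (lam : ℝ) (y : ℝ → ℝ) : Prop :=
  ∀ x ∈ s, -(deriv (deriv y) x) + q x * y x = lam ^ 2 * y x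

namespace SolvesSchrodingerOn

variable {s : Set ℝ} {q y : ℝ → ℝ} {lam : ℝ}

theorem deriv_deriv_eq (hy : SolvesSchrodingerOn s q lam y) :
    ∀ x ∈ s, deriv (deriv y) x = (q x - lam ^ 2) * y x :=
  fun x hx => by linear_combination -hy x hx

theorem const_mul (hy : SolvesSchrodingerOn s q lam y) (c : ℝ) :
    SolvesSchrodingerOn s q lam fun x => c * y x := fun x hx => by
  simp only [deriv_const_mul_field']
  linear_combination c * hy x hx

end SolvesSchrodingerOn

namespace NeumannFS

variable {τ lam : ℝ} {q φ : ℝ → ℝ}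

theorem solvesSchrodingerOn (hφ : NeumannFS τ q lam φ) : SolvesSchrodingerOn (Icc 0 τ) q lam φ :=
  hφ.2.1

theorem eq_mul_of_solvesSchrodingerOn (hτ : 0 ≤ τ) (hq : ContinuousOn q (Icc 0 τ))
    (hφ : NeumannFS τ q lam φ) {y : ℝ → ℝ} (hy : ContDiff ℝ 2 y)
    (hyeq : SolvesSchrodingerOn (Icc 0 τ) q lam y) (hyτ : deriv y τ = 0) :
    ∀ x ∈ Icc 0 τ, y x = y τ * φ x ∧ deriv y x = y τ * deriv φ x := by
  have := eqOn_of_deriv_deriv_eq_mul (hq.sub continuousOn_const) hy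
    (contDiff_const.mul hφ.1) hyeq.deriv_deriv_eq
    (hφ.solvesSchrodingerOn.const_mul (y τ)).deriv_deriv_eq
    (right_mem_Icc.2 hτ) (by simp [hφ.2.2.1]) (by simp [hφ.2.2.2, hyτ])
  intro x hx
  simpa [Prod.ext_iff] using this hx

theorem ne_zero_or_deriv_ne_zero (hτ : 0 ≤ τ) (hq : ContinuousOn q (Icc 0 τ))
    (hφ : NeumannFS τ q lam φ) : φ 0 ≠ 0 ∨ deriv φ 0 ≠ 0 := by
  by_contra! h
  have := eqOn_of_deriv_deriv_eq_mul (hq.sub continuousOn_const) hφ.1 contDiff_const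
    hφ.solvesSchrodingerOn.deriv_deriv_eq (g := 0) (by simp) (left_mem_Icc.2 hτ) h.1
    (by simpa using h.2) (right_mem_Icc.2 hτ)
  simp [hφ.2.2.1] at this

end NeumannFS

section
variable {ι K : Type*} [Fintype ι] [DecidableEq ι]

theorem Finset.prod_erase_univ_eq_zero_of_eq_zero_of_eq_zero [CommMonoidWithZero K]
    {p : ι → K} {i m : ι} (hi : p i = 0) (hm : p m = 0) (him : i ≠ m) (j : ι) :
    ∏ k ∈ univ.erase j, p k = 0 := by
  rcases eq_or_ne j i with rfl | hji
  · exact prod_eq_zero (mem_erase.2 ⟨him.symm, mem_univ m⟩) hm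
  · exact prod_eq_zero (mem_erase.2 ⟨hji.symm, mem_univ i⟩) hi

variable [Field K] {p d : ι → K} {h : K}

theorem mul_sum_mul_prod_erase_sub_eq {a : ι → K} {v : K} (hav : ∀ j, a j * p j = v) :
    v * (∑ j, d j * ∏ k ∈ Finset.univ.erase j, p k - h * ∏ j, p j)
      = (∑ j, a j * d j - h * v) * ∏ j, p j := by
  have key : ∀ j, v * ∏ k ∈ Finset.univ.erase j, p k = a j * ∏ j, p j := fun j => by
    rw [← Finset.mul_prod_erase _ _ (Finset.mem_univ j), ← hav j]; ring
  simp only [mul_sub, sub_mul, Finset.mul_sum, Finset.sum_mul]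
  congr 1
  · exact Finset.sum_congr rfl fun j _ => by linear_combination d j * key j
  · ring

theorem sum_mul_prod_erase_eq_of_mul_eq (hpd : ∀ j, p j ≠ 0 ∨ d j ≠ 0) {a : ι → K} (ha : a ≠ 0)
    {v : K} (hav : ∀ j, a j * p j = v) (hsum : ∑ j, a j * d j = h * v) :
    ∑ j, d j * ∏ k ∈ Finset.univ.erase j, p k = h * ∏ j, p j := by
  rw [← sub_eq_zero]
  by_cases hv : v = 0
  · subst hv
    obtain ⟨j, hj⟩ := Function.ne_iff.1 ha
    have hpj : p j = 0 := (mul_eq_zero.1 (hav j)).resolve_left hj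
    rw [Finset.prod_eq_zero (Finset.mem_univ j) hpj, mul_zero, sub_zero]
    by_cases hm : ∃ m, m ≠ j ∧ p m = 0
    · obtain ⟨m, hmj, hm⟩ := hm
      exact Finset.sum_eq_zero fun k _ => by
        rw [Finset.prod_erase_univ_eq_zero_of_eq_zero_of_eq_zero hpj hm hmj.symm k, mul_zero]
    · push Not at hm
      have hak : ∀ k, k ≠ j → a k = 0 := fun k hk =>
        (mul_eq_zero.1 (hav k)).resolve_right (hm k hk)
      rw [Finset.sum_eq_single j (fun k _ hk => by rw [hak k hk, zero_mul])
        (fun hj => absurd (Finset.mem_univ j) hj), mul_zero] at hsum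
      exact absurd ((mul_eq_zero.1 hsum).resolve_left hj) ((hpd j).resolve_left (not_not.2 hpj))
  · apply (mul_eq_zero.1 _).resolve_left hv
    rw [mul_sum_mul_prod_erase_sub_eq hav, hsum, sub_self, zero_mul]

theorem exists_mul_eq_of_sum_mul_prod_erase_eq [Nonempty ι] (hpd : ∀ j, p j ≠ 0 ∨ d j ≠ 0)
    (hΨ : ∑ j, d j * ∏ k ∈ Finset.univ.erase j, p k = h * ∏ j, p j) :
    ∃ a : ι → K, a ≠ 0 ∧ ∃ v, (∀ j, a j * p j = v) ∧ ∑ j, a j * d j = h * v := by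
  by_cases hP : ∃ i, ∏ k ∈ Finset.univ.erase i, p k ≠ 0
  · obtain ⟨i, hi⟩ := hP
    refine ⟨fun j => ∏ k ∈ Finset.univ.erase j, p k, Function.ne_iff.2 ⟨i, hi⟩, ∏ j, p j,
      fun j => by rw [mul_comm, Finset.mul_prod_erase _ _ (Finset.mem_univ j)], ?_⟩
    simpa only [mul_comm] using hΨ
  push Not at hP
  obtain ⟨i⟩ := ‹Nonempty ι›
  obtain ⟨m, -, hm⟩ := Finset.prod_eq_zero_iff.1 (hP i)
  obtain ⟨m', hm'm, hm'⟩ := Finset.prod_eq_zero_iff.1 (hP m)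
  -- any `a` supported on the two zeros `m, m'` of `p` has `v = 0`; choose it to cancel the sum
  refine ⟨Pi.single m (d m') - Pi.single m' (d m), Function.ne_iff.2 ⟨m, ?_⟩, 0, fun j => ?_, ?_⟩
  · simpa [Pi.single_apply, (Finset.mem_erase.1 hm'm).1.symm] using
      (hpd m').resolve_left (not_not.2 hm')
  · rcases eq_or_ne j m with rfl | hjm
    · rw [hm, mul_zero]
    rcases eq_or_ne j m' with rfl | hjm'
    · rw [hm', mul_zero]
    simp [hjm, hjm']
  · simp only [Pi.sub_apply, sub_mul, Finset.sum_sub_distrib, Pi.single_apply, ite_mul,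
      zero_mul, Finset.sum_ite_eq', Finset.mem_univ, if_true, mul_zero]
    ring

theorem exists_ne_zero_mul_eq_const_iff [Nonempty ι] (hpd : ∀ j, p j ≠ 0 ∨ d j ≠ 0) :
    (∃ a : ι → K, a ≠ 0 ∧ ∃ v, (∀ j, a j * p j = v) ∧ ∑ j, a j * d j = h * v) ↔
      ∑ j, d j * ∏ k ∈ Finset.univ.erase j, p k = h * ∏ j, p j :=
  ⟨fun ⟨_, ha, _, hav, hsum⟩ => sum_mul_prod_erase_eq_of_mul_eq hpd ha hav hsum,
    exists_mul_eq_of_sum_mul_prod_erase_eq hpd⟩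

end

theorem characteristic_equation_general
    (N : ℕ) (hN : 0 < N) (τ : Fin N → ℝ) (hτ : ∀ j, 0 < τ j)
    (q : Fin N → ℝ → ℝ) (hq : ∀ j, ContinuousOn (q j) (Set.Icc 0 (τ j)))
    (lam : ℝ) (h : ℝ)
    (φ : Fin N → ℝ → ℝ)
    (hφ : ∀ j, NeumannFS (τ j) (q j) lam (φ j)) :
    (∃ y : Fin N → ℝ → ℝ,
      (∀ j, ContDiff ℝ 2 (y j)) ∧
      (∀ j, ∀ x ∈ Set.Icc 0 (τ j),
        -(deriv (deriv (y j)) x) + q j x * y j x = lam ^ 2 * y j x) ∧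
      (∀ j, deriv (y j) (τ j) = 0) ∧
      (∀ j k, y j 0 = y k 0) ∧
      (∑ j, deriv (y j) 0 = h * y ⟨0, hN⟩ 0) ∧
      (∃ j, ∃ x ∈ Set.Icc 0 (τ j), y j x ≠ 0))
    ↔ ∑ j, deriv (φ j) 0 * ∏ k ∈ Finset.univ.erase j, φ k 0 =
        h * ∏ j, φ j 0 := by
  have : Nonempty (Fin N) := ⟨⟨0, hN⟩⟩
  have h0 : ∀ j, (0 : ℝ) ∈ Icc 0 (τ j) := fun j => left_mem_Icc.2 (hτ j).le
  rw [← exists_ne_zero_mul_eq_const_iff fun j =>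
    (hφ j).ne_zero_or_deriv_ne_zero (hτ j).le (hq j)]
  constructor
  · rintro ⟨y, hy, hyeq, hyτ, hy0, hsum, j₀, x₀, hx₀, hyx₀⟩
    have hrep := fun j => (hφ j).eq_mul_of_solvesSchrodingerOn (hτ j).le (hq j) (hy j)
      (hyeq j) (hyτ j)
    refine ⟨fun j => y j (τ j), Function.ne_iff.2 ⟨j₀, fun hz => hyx₀ ?_⟩, y ⟨0, hN⟩ 0,
      fun j => ((hrep j 0 (h0 j)).1.symm.trans (hy0 j _)), ?_⟩
    · rw [(hrep j₀ x₀ hx₀).1, hz, Pi.zero_apply, zero_mul]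
    · rw [← hsum]
      exact Finset.sum_congr rfl fun j _ => (hrep j 0 (h0 j)).2.symm
  · rintro ⟨a, ha, v, hav, hsum⟩
    obtain ⟨j₀, hj₀⟩ := Function.ne_iff.1 ha
    refine ⟨fun j x => a j * φ j x, fun j => contDiff_const.mul (hφ j).1,
      fun j => (hφ j).solvesSchrodingerOn.const_mul (a j), fun j => ?_,
      fun j k => (hav j).trans (hav k).symm, ?_, j₀, τ j₀, right_mem_Icc.2 (hτ j₀).le, ?_⟩
    · simp [deriv_const_mul_field', (hφ j).2.2.2]
    · simpa [deriv_const_mul_field', hav] using hsum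
    · simpa [(hφ j₀).2.2.1] using hj₀

/-- **Characteristic equation for the eigenvalues.** λ² > 0 is an eigenvalue of
the Schrodinger operator on the compact star-shaped graph, with Neumann terminal conditions
and node parameter h, if and only if Ψ(λ) = h Φ(λ), where Φ(λ) = Π_j φ_j(0,λ) and
Ψ(λ) = Σ_j φ_j'(0,λ) Π_{k ≠ j} φ_k(0,λ). -/
theorem characteristic_equation
    (N : ℕ) (hN : 0 < N) (τ : Fin N → ℝ) (hτ : ∀ j, 0 < τ j)
    (q : Fin N → ℝ → ℝ) (hq : ∀ j, ContinuousOn (q j) (Set.Icc 0 (τ j)))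
    (lam : ℝ) (hlam : 0 < lam) (h : ℝ)
    (φ : Fin N → ℝ → ℝ)
    (hφ : ∀ j, NeumannFS (τ j) (q j) lam (φ j)) :
    (∃ y : Fin N → ℝ → ℝ,
      (∀ j, ContDiff ℝ 2 (y j)) ∧
      (∀ j, ∀ x ∈ Set.Icc 0 (τ j),
        -(deriv (deriv (y j)) x) + q j x * y j x = lam ^ 2 * y j x) ∧
      (∀ j, deriv (y j) (τ j) = 0) ∧
      (∀ j k, y j 0 = y k 0) ∧
      (∑ j, deriv (y j) 0 = h * y ⟨0, hN⟩ 0) ∧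
      (∃ j, ∃ x ∈ Set.Icc 0 (τ j), y j x ≠ 0))
    ↔ ∑ j, deriv (φ j) 0 * ∏ k ∈ Finset.univ.erase j, φ k 0 =
        h * ∏ j, φ j 0 :=
  characteristic_equation_general N hN τ hτ q hq lam h φ hφ
end

section
/- Fix N ≥ 1, lengths τ_1,…,τ_N > 0, and two families of continuous potentials q_j, q̃_j : [0,τ_j] → ℝ with Neumann fundamental solutions φ_j(·,ω), φ̃_j(·,ω). Define Φ(ω) = ∏_{j=1}^N φ_j(0,ω), Ψ(ω) = Σ_{j=1}^N φ_j'(0,ω) ∏_{k≠j} φ_k(0,ω), and similarly Φ̃, Ψ̃. Then for every ω ∈ ℝ: Σ_{j=1}^N (∏_{k≠j} φ_k(0,ω) φ̃_k(0,ω)) ∫_0^{τ_j} (q̃_j(x) − q_j(x)) φ_j(x,ω) φ̃_j(x,ω) dx = Ψ(ω) Φ̃(ω) − Φ(ω) Ψ̃(ω). In particular, if Φ Ψ̃ = Φ̃ Ψ identically on ℝ, then Σ_{j=1}^N (∏_{k≠j} φ_k(0,ω) φ̃_k(0,ω)) ∫_0^{τ_j} (q̃_j − q_j) φ_j(·,ω)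 φ̃_j(·,ω) = 0 for every ω ∈ ℝ. -/
open Finset

theorem Finset.sum_prod_erase_mul_cross_sub {ι R : Type*} [DecidableEq ι] [CommRing R]
    (s : Finset ι) (a b c d : ι → R) :
    ∑ j ∈ s, (∏ k ∈ s.erase j, a k * b k) * (c j * b j - a j * d j) =
      (∑ j ∈ s, c j * ∏ k ∈ s.erase j, a k) * ∏ j ∈ s, b j -
        (∏ j ∈ s, a j) * ∑ j ∈ s, d j * ∏ k ∈ s.erase j, b k := by
  rw [sum_mul, mul_sum, ← sum_sub_distrib]
  refine sum_congr rfl fun j hj => ?_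
  rw [prod_mul_distrib, ← mul_prod_erase s a hj, ← mul_prod_erase s b hj]
  ring

theorem integral_mul_deriv_deriv_sub {f g : ℝ → ℝ} (hf : ContDiff ℝ 2 f) (hg : ContDiff ℝ 2 g)
    (a b : ℝ) :
    ∫ x in a..b, (f x * deriv (deriv g) x - deriv (deriv f) x * g x) =
      (f b * deriv g b - deriv f b * g b) - (f a * deriv g a - deriv f a * g a) := by
  have hf' := hf.differentiable_deriv_two
  have hg' := hg.differentiable_deriv_two
  have hf1 := hf.differentiable two_ne_zero
  have hg1 := hg.differentiable two_ne_zero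
  refine intervalIntegral.integral_eq_sub_of_hasDerivAt
    (f := fun x => f x * deriv g x - deriv f x * g x) (fun x _ => ?_) ?_
  · exact (((hf1 x).hasDerivAt.mul (hg' x).hasDerivAt).sub
      ((hf' x).hasDerivAt.mul (hg1 x).hasDerivAt)).congr_deriv (by ring)
  · have hf'' := (hf.deriv' (n := 1)).continuous_deriv le_rfl
    have hg'' := (hg.deriv' (n := 1)).continuous_deriv le_rfl
    exact ((hf1.continuous.mul hg'').sub (hf''.mul hg1.continuous)).intervalIntegrable a b

theorem NeumannFS.integral_sub_mul_mul {τ ω : ℝ} {q qt f g : ℝ → ℝ} (hτ : 0 ≤ τ)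
    (hf : NeumannFS τ q ω f) (hg : NeumannFS τ qt ω g) :
    ∫ x in (0:ℝ)..τ, (qt x - q x) * f x * g x = deriv f 0 * g 0 - f 0 * deriv g 0 := by
  obtain ⟨hf2, hfeq, hfτ, hfτ'⟩ := hf
  obtain ⟨hg2, hgeq, hgτ, hgτ'⟩ := hg
  have hderiv_wronskian : Set.EqOn (fun x => (qt x - q x) * f x * g x)
      (fun x => f x * deriv (deriv g) x - deriv (deriv f) x * g x) (Set.uIcc 0 τ) := by
    intro x hx
    rw [Set.uIcc_of_le hτ] at hx
    linear_combination (-g x) * hfeq x hx + f x * hgeq x hx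
  rw [intervalIntegral.integral_congr hderiv_wronskian, integral_mul_deriv_deriv_sub hf2 hg2,
    hfτ, hgτ, hfτ', hgτ']
  ring

theorem difference_identity_general
    (N : ℕ) (τ : Fin N → ℝ) (hτ : ∀ j, 0 < τ j)
    (q qt : Fin N → ℝ → ℝ)
    (φ φt : Fin N → ℝ → ℝ → ℝ)
    (hφ : ∀ j (ω : ℝ), NeumannFS (τ j) (q j) ω (fun x => φ j x ω))
    (hφt : ∀ j (ω : ℝ), NeumannFS (τ j) (qt j) ω (fun x => φt j x ω)) :
    (∀ ω : ℝ,
      ∑ j, (∏ k ∈ Finset.univ.erase j, φ k 0 ω * φt k 0 ω) *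
          ∫ x in (0:ℝ)..(τ j), (qt j x - q j x) * φ j x ω * φt j x ω =
        (∑ j, deriv (fun x => φ j x ω) 0 * ∏ k ∈ Finset.univ.erase j, φ k 0 ω) *
            (∏ j, φt j 0 ω) -
          (∏ j, φ j 0 ω) *
            (∑ j, deriv (fun x => φt j x ω) 0 * ∏ k ∈ Finset.univ.erase j, φt k 0 ω)) ∧
    ((∀ ω : ℝ,
        (∏ j, φ j 0 ω) *
            (∑ j, deriv (fun x => φt j x ω) 0 * ∏ k ∈ Finset.univ.erase j, φt k 0 ω) =
          (∏ j, φt j 0 ω) *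
            (∑ j, deriv (fun x => φ j x ω) 0 * ∏ k ∈ Finset.univ.erase j, φ k 0 ω)) →
      ∀ ω : ℝ,
        ∑ j, (∏ k ∈ Finset.univ.erase j, φ k 0 ω * φt k 0 ω) *
            ∫ x in (0:ℝ)..(τ j), (qt j x - q j x) * φ j x ω * φt j x ω = 0) := by
  have identity : ∀ ω : ℝ,
      ∑ j, (∏ k ∈ univ.erase j, φ k 0 ω * φt k 0 ω) *
          ∫ x in (0:ℝ)..(τ j), (qt j x - q j x) * φ j x ω * φt j x ω =
        (∑ j, deriv (fun x => φ j x ω) 0 * ∏ k ∈ univ.erase j, φ k 0 ω) * (∏ j, φt j 0 ω) -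
          (∏ j, φ j 0 ω) *
            (∑ j, deriv (fun x => φt j x ω) 0 * ∏ k ∈ univ.erase j, φt k 0 ω) := fun ω => by
    simp only [fun j => (hφ j ω).integral_sub_mul_mul (hτ j).le (hφt j ω)]
    exact sum_prod_erase_mul_cross_sub _ _ _ _ _
  refine ⟨identity, fun hΦΨ ω => ?_⟩
  rw [identity ω, hΦΨ ω]
  ring

/-- **Proposition on the difference of potentials.** For all real ω,
Σ_j (Π_{k ≠ j} φ_k(0,ω) φ~_k(0,ω)) ∫_0^{τ_j} (q~_j − q_j) φ_j φ~_j = Ψ(ω)Φ~(ω) − Φ(ω)Ψ~(ω);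
in particular this sum vanishes identically when Φ Ψ~ = Φ~ Ψ on ℝ. -/
theorem difference_identity
    (N : ℕ) (hN : 0 < N) (τ : Fin N → ℝ) (hτ : ∀ j, 0 < τ j)
    (q qt : Fin N → ℝ → ℝ)
    (hq : ∀ j, ContinuousOn (q j) (Set.Icc 0 (τ j)))
    (hqt : ∀ j, ContinuousOn (qt j) (Set.Icc 0 (τ j)))
    (φ φt : Fin N → ℝ → ℝ → ℝ)
    (hφ : ∀ j (ω : ℝ), NeumannFS (τ j) (q j) ω (fun x => φ j x ω))
    (hφt : ∀ j (ω : ℝ), NeumannFS (τ j) (qt j) ω (fun x => φt j x ω)) :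
    (∀ ω : ℝ,
      ∑ j, (∏ k ∈ Finset.univ.erase j, φ k 0 ω * φt k 0 ω) *
          ∫ x in (0:ℝ)..(τ j), (qt j x - q j x) * φ j x ω * φt j x ω =
        (∑ j, deriv (fun x => φ j x ω) 0 * ∏ k ∈ Finset.univ.erase j, φ k 0 ω) *
            (∏ j, φt j 0 ω) -
          (∏ j, φ j 0 ω) *
            (∑ j, deriv (fun x => φt j x ω) 0 * ∏ k ∈ Finset.univ.erase j, φt k 0 ω)) ∧
    ((∀ ω : ℝ,
        (∏ j, φ j 0 ω) *
            (∑ j, deriv (fun x => φt j x ω) 0 * ∏ k ∈ Finset.univ.erase j, φt k 0 ω) =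
          (∏ j, φt j 0 ω) *
            (∑ j, deriv (fun x => φ j x ω) 0 * ∏ k ∈ Finset.univ.erase j, φ k 0 ω)) →
      ∀ ω : ℝ,
        ∑ j, (∏ k ∈ Finset.univ.erase j, φ k 0 ω * φt k 0 ω) *
            ∫ x in (0:ℝ)..(τ j), (qt j x - q j x) * φ j x ω * φt j x ω = 0) :=
  difference_identity_general N τ hτ q qt φ φt hφ hφt
end

section
/- Let m, m̃ ≥ 1 be integers, let n_1,…,n_m and ñ_1,…,ñ_{m̃} be positive integers, and let 0 < τ_1 < τ_2 < ⋯ < τ_m and 0 < τ̃_1 < τ̃_2 < ⋯ < τ̃_{m̃} be real numbers. If Σ_{j=1}^m n_j tan(ω τ_j) = Σ_{k=1}^{m̃} ñ_k tan(ω τ̃_k) for every ω > 0 at which all the quantities tan(ω τ_j) and tan(ω τ̃_k) are defined (i.e. ω τ_j and ω τ̃_k avoid π/2 + πℤ), then m = m̃ and τ_j = τ̃_j, n_j = ñ_j for every j = 1,…,m. -/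
/-!
Merge the two families into one function of the length `t`: the difference of the total
multiplicities of the lines of length `t`. It multiplies `tan (ω * t)` in a sum that vanishes
wherever all tangents are defined, and tangents of distinct positive frequencies are linearly
independent: below the first pole `π / (2 * a)` of the largest frequency `a` every other term stays
bounded, so the coefficient of `tan (ω * a)` is zero; the remaining identity extends by continuity
across the countably many zeros of `cos (ω * a)`, and one inducts. The multiplicities being
positive, both families then have the same set of lengths, hence, being strictly increasing, the
same number of lines and the same lengths in order.
-/

open Real Filter Topology Set

lemma countable_setOf_cos_mul_eq_zero {a : ℝ} (ha : a ≠ 0) :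
    {ω : ℝ | cos (ω * a) = 0}.Countable := by
  refine (countable_range fun k : ℤ => (2 * k + 1) * π / 2 / a).mono fun ω hω => ?_
  obtain ⟨k, hk⟩ := cos_eq_zero_iff.1 hω
  exact ⟨k, by simp only [← hk, mul_div_cancel_right₀ _ ha]⟩

lemma frequently_cos_mul_ne_zero {a : ℝ} (ha : a ≠ 0) (x : ℝ) :
    ∃ᶠ ω in 𝓝 x, cos (ω * a) ≠ 0 :=
  mem_closure_iff_frequently.1 ((countable_setOf_cos_mul_eq_zero ha).dense_compl ℝ x)

lemma continuousAt_sum_mul_tan (s : Finset ℝ) (c : ℝ → ℝ) {x : ℝ}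
    (hx : ∀ t ∈ s, cos (x * t) ≠ 0) :
    ContinuousAt (fun ω => ∑ t ∈ s, c t * tan (ω * t)) x :=
  tendsto_finsetSum s fun t ht =>
    continuousAt_const.mul <|
      (continuousAt_tan.2 (hx t ht)).comp (f := fun ω => ω * t) (by fun_prop)

lemma tendsto_tan_mul_nhdsLT {a : ℝ} (ha : 0 < a) :
    Tendsto (fun ω => tan (ω * a)) (𝓝[<] (π / (2 * a))) atTop := by
  have hpole : π / (2 * a) * a = π / 2 := by field_simp
  refine tendsto_tan_pi_div_two.comp (tendsto_nhdsWithin_iff.2 ⟨?_, ?_⟩)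
  · exact hpole ▸ (continuousAt_id.mul continuousAt_const).tendsto.mono_left nhdsWithin_le_nhds
  · filter_upwards [self_mem_nhdsWithin] with ω hω
    exact hpole ▸ mul_lt_mul_of_pos_right hω ha

lemma eq_zero_of_mul_tan_add_eq_zero {F : ℝ → ℝ} {a b : ℝ} (ha : 0 < a)
    (hF : ContinuousAt F (π / (2 * a)))
    (h : ∀ᶠ ω in 𝓝[<] (π / (2 * a)), b * tan (ω * a) + F ω = 0) : b = 0 := by
  by_contra hb
  have hlim : Tendsto (fun ω => -F ω / b) (𝓝[<] (π / (2 * a))) (𝓝 (-F (π / (2 * a)) / b)) :=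
    (hF.neg.div_const b).tendsto.mono_left nhdsWithin_le_nhds
  refine not_tendsto_atTop_of_tendsto_nhds (hlim.congr' ?_) (tendsto_tan_mul_nhdsLT ha)
  filter_upwards [h] with ω hω
  rw [div_eq_iff hb]
  linear_combination -hω

lemma cos_mul_ne_zero_of_mul_lt {ω t : ℝ} (hω : 0 < ω) (ht : 0 < t) (h : ω * t < π / 2) :
    cos (ω * t) ≠ 0 :=
  (cos_pos_of_mem_Ioo ⟨by linarith [mul_pos hω ht, pi_pos], h⟩).ne'

theorem eq_zero_of_sum_mul_tan_eq_zero (c : ℝ → ℝ) (s : Finset ℝ) (hs : ∀ t ∈ s, 0 < t)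
    (h : ∀ ω, 0 < ω → (∀ t ∈ s, cos (ω * t) ≠ 0) → ∑ t ∈ s, c t * tan (ω * t) = 0) :
    ∀ t ∈ s, c t = 0 := by
  induction s using Finset.induction_on_max with
  | empty => simp
  | insert a s hlt ih =>
    have ha : 0 < a := hs a (s.mem_insert_self a)
    have hs' : ∀ t ∈ s, 0 < t := fun t ht => hs t (Finset.mem_insert_of_mem ht)
    have hsum (ω : ℝ) : ∑ t ∈ insert a s, c t * tan (ω * t) =
        c a * tan (ω * a) + ∑ t ∈ s, c t * tan (ω * t) :=
      Finset.sum_insert fun has => (hlt a has).false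
    have hpole : π / (2 * a) * a = π / 2 := by field_simp
    have hca : c a = 0 := by
      refine eq_zero_of_mul_tan_add_eq_zero ha (continuousAt_sum_mul_tan s c fun t ht => ?_) ?_
      · refine cos_mul_ne_zero_of_mul_lt (by positivity) (hs' t ht) ?_
        nlinarith [hlt t ht, pi_pos]
      · filter_upwards [Ioo_mem_nhdsLT (by positivity : (0 : ℝ) < π / (2 * a))] with ω hω
        rw [← hsum]
        refine h ω hω.1 fun t ht => cos_mul_ne_zero_of_mul_lt hω.1 (hs t ht) ?_
        have : t ≤ a := by
          rcases Finset.mem_insert.1 ht with rfl | ht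
          exacts [le_rfl, (hlt t ht).le]
        linarith [mul_le_mul_of_nonneg_left this hω.1.le, mul_lt_mul_of_pos_right hω.2 ha]
    refine Finset.forall_mem_insert _ _ _ |>.2 ⟨hca, ih hs' fun ω hω hcos => ?_⟩
    have hnear : ∀ᶠ y in 𝓝 ω, 0 < y ∧ ∀ t ∈ s, cos (y * t) ≠ 0 :=
      (eventually_gt_nhds hω).and <| (eventually_all_finset s).2 fun t ht =>
        (continuous_cos.comp (continuous_mul_const t)).continuousAt.eventually_ne (hcos t ht)
    refine tendsto_nhds_unique_of_frequently_eq (continuousAt_sum_mul_tan s c hcos)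
      continuousAt_const ?_
    refine ((frequently_cos_mul_ne_zero ha.ne' ω).and_eventually hnear).mono ?_
    rintro y ⟨hya, hy, hys⟩
    have := h y hy (Finset.forall_mem_insert _ _ _ |>.2 ⟨hya, hys⟩)
    rwa [hsum, hca, zero_mul, zero_add] at this

section FiberWeight

variable {ι ι' : Type*}

noncomputable def fiberWeight [Fintype ι] (n : ι → ℕ) (τ : ι → ℝ) (t : ℝ) : ℝ :=
  ∑ j with τ j = t, (n j : ℝ)

lemma sum_mul_eq_sum_fiberWeight_mul [Fintype ι] (n : ι → ℕ) (τ : ι → ℝ) (g : ℝ → ℝ)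
    {S : Finset ℝ} (hS : ∀ j, τ j ∈ S) :
    ∑ j, (n j : ℝ) * g (τ j) = ∑ t ∈ S, fiberWeight n τ t * g t := by
  rw [← Finset.sum_fiberwise_of_maps_to (g := τ) (t := S) fun j _ => hS j]
  refine Finset.sum_congr rfl fun t _ => ?_
  rw [fiberWeight, Finset.sum_mul]
  exact Finset.sum_congr rfl fun j hj => by rw [(Finset.mem_filter.1 hj).2]

lemma fiberWeight_apply_of_injective [Fintype ι] (n : ι → ℕ) {τ : ι → ℝ}
    (hτ : Function.Injective τ) (j : ι) : fiberWeight n τ (τ j) = n j := by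
  rw [fiberWeight, Finset.sum_eq_single_of_mem j (by simp)]
  exact fun i hi hij => (hij (hτ (Finset.mem_filter.1 hi).2)).elim

lemma range_subset_of_fiberWeight_eq [Fintype ι'] {n : ι → ℕ} {τ : ι → ℝ} {n' : ι' → ℕ}
    {τ' : ι' → ℝ} (hn : ∀ j, 0 < n j) (h : ∀ j, fiberWeight n' τ' (τ j) = n j) :
    range τ ⊆ range τ' := by
  rintro _ ⟨j, rfl⟩
  have hne : fiberWeight n' τ' (τ j) ≠ 0 := by rw [h]; exact_mod_cast (hn j).ne'
  obtain ⟨k, hk, -⟩ := Finset.exists_ne_zero_of_sum_ne_zero hne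
  exact ⟨k, (Finset.mem_filter.1 hk).2⟩

lemma fiberWeight_eq_of_sum_mul_tan_eq [Fintype ι] [Fintype ι'] {n : ι → ℕ} {τ : ι → ℝ}
    {n' : ι' → ℕ} {τ' : ι' → ℝ} {S : Finset ℝ} (hS : ∀ t ∈ S, 0 < t) (hτS : ∀ j, τ j ∈ S)
    (hτ'S : ∀ k, τ' k ∈ S)
    (h : ∀ ω, 0 < ω → (∀ t ∈ S, cos (ω * t) ≠ 0) →
      ∑ j, (n j : ℝ) * tan (ω * τ j) = ∑ k, (n' k : ℝ) * tan (ω * τ' k)) :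
    ∀ t ∈ S, fiberWeight n τ t = fiberWeight n' τ' t := by
  refine fun t ht => sub_eq_zero.1 <|
    eq_zero_of_sum_mul_tan_eq_zero (fun t => fiberWeight n τ t - fiberWeight n' τ' t) S hS
      (fun ω hω hcos => ?_) t ht
  simp only [sub_mul, Finset.sum_sub_distrib]
  rw [← sum_mul_eq_sum_fiberWeight_mul n τ (fun t => tan (ω * t)) hτS,
    ← sum_mul_eq_sum_fiberWeight_mul n' τ' (fun t => tan (ω * t)) hτ'S, h ω hω hcos, sub_self]

end FiberWeight

lemma StrictMono.exists_cast_of_range_eq {α : Type*} [Preorder α] {m k : ℕ} {f : Fin m → α}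
    {g : Fin k → α} (hf : StrictMono f) (hg : StrictMono g) (h : range f = range g) :
    ∃ e : m = k, ∀ j, g (Fin.cast e j) = f j := by
  obtain rfl : m = k := by
    simpa using (Nat.card_range_of_injective hf.injective).symm.trans <|
      (congrArg (fun s : Set α => Nat.card s) h).trans (Nat.card_range_of_injective hg.injective)
  exact ⟨rfl, fun j => congrFun ((hg.range_inj hf).1 h.symm) j⟩

theorem tan_sum_identifiability_general
    (m mt : ℕ)
    (n : Fin m → ℕ) (nt : Fin mt → ℕ)
    (hn : ∀ j, 0 < n j) (hnt : ∀ k, 0 < nt k)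
    (τ : Fin m → ℝ) (τt : Fin mt → ℝ)
    (hτpos : ∀ j, 0 < τ j) (hτtpos : ∀ k, 0 < τt k)
    (hτmono : StrictMono τ) (hτtmono : StrictMono τt)
    (heq : ∀ ω : ℝ, 0 < ω →
      (∀ j, Real.cos (ω * τ j) ≠ 0) → (∀ k, Real.cos (ω * τt k) ≠ 0) →
      ∑ j, (n j : ℝ) * Real.tan (ω * τ j) = ∑ k, (nt k : ℝ) * Real.tan (ω * τt k)) :
    ∃ h : m = mt, ∀ j : Fin m, τt (Fin.cast h j) = τ j ∧ nt (Fin.cast h j) = n j := by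
  classical
  set S := Finset.univ.image τ ∪ Finset.univ.image τt
  have hτS (j : Fin m) : τ j ∈ S := by simp [S]
  have hτtS (k : Fin mt) : τt k ∈ S := by simp [S]
  have hweight : ∀ t ∈ S, fiberWeight n τ t = fiberWeight nt τt t :=
    fiberWeight_eq_of_sum_mul_tan_eq (by simp [S, or_imp, forall_and, hτpos, hτtpos]) hτS hτtS
      fun ω hω hcos => heq ω hω (fun j => hcos _ (hτS j)) (fun k => hcos _ (hτtS k))
  have hn' (j : Fin m) : fiberWeight nt τt (τ j) = n j :=
    (hweight _ (hτS j)).symm.trans (fiberWeight_apply_of_injective n hτmono.injective j)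
  have hnt' (k : Fin mt) : fiberWeight n τ (τt k) = nt k :=
    (hweight _ (hτtS k)).trans (fiberWeight_apply_of_injective nt hτtmono.injective k)
  obtain ⟨e, he⟩ := hτmono.exists_cast_of_range_eq hτtmono <|
    (range_subset_of_fiberWeight_eq hn hn').antisymm (range_subset_of_fiberWeight_eq hnt hnt')
  refine ⟨e, fun j => ⟨he j, ?_⟩⟩
  have := fiberWeight_apply_of_injective nt hτtmono.injective (Fin.cast e j)
  rw [he j, hn'] at this
  exact_mod_cast this.symm

/-- **geometry identification for uniform lines.** If two finite families of
multiplicities and strictly increasing positive lengths give the same function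
ω ↦ Σ_j n_j tan(ω τ_j) wherever all the tangents are defined, then the families coincide. -/
theorem tan_sum_identifiability
    (m mt : ℕ) (hm : 0 < m) (hmt : 0 < mt)
    (n : Fin m → ℕ) (nt : Fin mt → ℕ)
    (hn : ∀ j, 0 < n j) (hnt : ∀ k, 0 < nt k)
    (τ : Fin m → ℝ) (τt : Fin mt → ℝ)
    (hτpos : ∀ j, 0 < τ j) (hτtpos : ∀ k, 0 < τt k)
    (hτmono : StrictMono τ) (hτtmono : StrictMono τt)
    (heq : ∀ ω : ℝ, 0 < ω →
      (∀ j, Real.cos (ω * τ j) ≠ 0) → (∀ k, Real.cos (ω * τt k) ≠ 0) →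
      ∑ j, (n j : ℝ) * Real.tan (ω * τ j) = ∑ k, (nt k : ℝ) * Real.tan (ω * τt k)) :
    ∃ h : m = mt, ∀ j : Fin m, τt (Fin.cast h j) = τ j ∧ nt (Fin.cast h j) = n j :=
  tan_sum_identifiability_general m mt n nt hn hnt τ τt hτpos hτtpos hτmono hτtmono heq
end

section
/- Let n ≥ 1, let λ_1,…,λ_n be distinct real numbers and c_1,…,c_n complex numbers, and set F(ω) = Σ_{k=1}^n c_k e^{iλ_kω}. If there exist constants C > 0 and Ω > 0 such that |F(ω)| ≤ C/ω for all ω ≥ Ω, then c_k = 0 for all k, i.e. F is identically zero. -/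
/-!
Multiplying `F` by `e^{-iλⱼω}` shifts the frequencies so that `λⱼ` becomes the only zero one.
The mean `T⁻¹ ∫₀ᵀ` of `e^{iμω}` tends to `1` for `μ = 0` and to `0` otherwise (the integral stays
bounded), so the mean of `F(ω) e^{-iλⱼω}` tends to `cⱼ`. But the decay makes this function tend
to `0`, and averages of a function tending to `0` tend to `0`; hence `cⱼ = 0`.
-/

open Complex Filter Asymptotics MeasureTheory intervalIntegral Topology

theorem isLittleO_integral_of_tendsto_zero {E : Type*} [NormedAddCommGroup E] [NormedSpace ℝ E]
    {f : ℝ → E} (hf : LocallyIntegrable f) (h : Tendsto f atTop (𝓝 0)) :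
    (fun T : ℝ => ∫ x in (0:ℝ)..T, f x) =o[atTop] id := by
  refine isLittleO_iff.2 fun ε hε => ?_
  have hsmall : ∀ᶠ x in atTop, ‖f x‖ ≤ ε / 2 :=
    h.norm.eventually (ge_mem_nhds (by simpa using half_pos hε))
  obtain ⟨A, hA⟩ := eventually_atTop.1 ((eventually_ge_atTop 0).and hsmall)
  have hfi (a b : ℝ) : IntervalIntegrable f volume a b :=
    (hf.integrableOn_isCompact isCompact_uIcc).intervalIntegrable
  set K := ‖∫ x in (0:ℝ)..A, f x‖
  filter_upwards [eventually_ge_atTop A, eventually_ge_atTop (2 * K / ε)] with T hAT hKT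
  have hA0 : 0 ≤ A := (hA A le_rfl).1
  have htail : ‖∫ x in A..T, f x‖ ≤ ε / 2 * |T - A| :=
    norm_integral_le_of_norm_le_const fun x hx =>
      (hA x (by rw [Set.uIoc_of_le hAT] at hx; exact hx.1.le)).2
  have hKT' : K ≤ ε / 2 * T := by
    rw [div_le_iff₀ hε] at hKT; linarith
  calc ‖∫ x in (0:ℝ)..T, f x‖
      = ‖(∫ x in (0:ℝ)..A, f x) + ∫ x in A..T, f x‖ := by
        rw [integral_add_adjacent_intervals (hfi 0 A) (hfi A T)]
    _ ≤ K + ε / 2 * |T - A| := norm_add_le_of_le le_rfl htail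
    _ ≤ ε * ‖id T‖ := by
        rw [abs_of_nonneg (by linarith), id, Real.norm_of_nonneg (by linarith)]
        nlinarith

theorem norm_integral_exp_I_mul_le {μ : ℝ} (hμ : μ ≠ 0) (T : ℝ) :
    ‖∫ ω in (0:ℝ)..T, exp (I * μ * ω)‖ ≤ 2 / |μ| := by
  have hIμ : I * μ ≠ 0 := mul_ne_zero I_ne_zero (ofReal_ne_zero.2 hμ)
  rw [integral_exp_mul_complex hIμ, norm_div, norm_mul, norm_I, one_mul, norm_real,
    Real.norm_eq_abs]
  gcongr
  calc ‖exp (I * μ * T) - exp (I * μ * (0:ℝ))‖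
      ≤ ‖exp (I * ↑(μ * T))‖ + ‖exp (I * ↑(μ * 0))‖ := by
        push_cast; rw [← mul_assoc, ← mul_assoc]; exact norm_sub_le _ _
    _ = 2 := by rw [norm_exp_I_mul_ofReal, norm_exp_I_mul_ofReal]; norm_num

theorem tendsto_inv_smul_integral_exp_I_mul (μ : ℝ) :
    Tendsto (fun T : ℝ => T⁻¹ • ∫ ω in (0:ℝ)..T, exp (I * μ * ω)) atTop
      (𝓝 (if μ = 0 then 1 else 0)) := by
  split_ifs with hμ
  · subst hμ
    refine tendsto_const_nhds.congr' ?_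
    filter_upwards [eventually_ne_atTop 0] with T hT
    simp [hT]
  · refine IsLittleO.tendsto_inv_smul_nhds_zero (g := id) ?_
    exact (isBigO_of_le (g := fun _ => 2 / |μ|) _ fun T =>
      (norm_integral_exp_I_mul_le hμ T).trans (Real.le_norm_self _)).trans_isLittleO
        (isLittleO_const_id_atTop _)

noncomputable def trigPoly {ι : Type*} [Fintype ι] (lam : ι → ℝ) (c : ι → ℂ) (ω : ℝ) : ℂ :=
  ∑ k, c k * exp (I * lam k * ω)

section trigPoly

variable {ι : Type*} [Fintype ι] (lam : ι → ℝ) (c : ι → ℂ)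

theorem continuous_trigPoly : Continuous (trigPoly lam c) := by
  unfold trigPoly; fun_prop

theorem trigPoly_sub_const (a ω : ℝ) :
    trigPoly (fun k => lam k - a) c ω = exp (I * ↑(-(a * ω))) * trigPoly lam c ω := by
  simp only [trigPoly, Finset.mul_sum, ← mul_assoc, mul_comm (exp _) (c _)]
  refine Finset.sum_congr rfl fun k _ => ?_
  rw [mul_assoc (c k), ← exp_add]
  push_cast; ring_nf

theorem norm_trigPoly_sub_const (a ω : ℝ) :
    ‖trigPoly (fun k => lam k - a) c ω‖ = ‖trigPoly lam c ω‖ := by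
  rw [trigPoly_sub_const, norm_mul, norm_exp_I_mul_ofReal, one_mul]

theorem tendsto_inv_smul_integral_trigPoly :
    Tendsto (fun T : ℝ => T⁻¹ • ∫ ω in (0:ℝ)..T, trigPoly lam c ω) atTop
      (𝓝 (∑ k with lam k = 0, c k)) := by
  have hmean (T : ℝ) : T⁻¹ • ∫ ω in (0:ℝ)..T, trigPoly lam c ω
      = ∑ k, c k * T⁻¹ • ∫ ω in (0:ℝ)..T, exp (I * lam k * ω) := by
    simp only [trigPoly]
    rw [integral_finsetSum fun k _ => (by fun_prop : Continuous _).intervalIntegrable _ _]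
    simp only [intervalIntegral.integral_const_mul, Finset.smul_sum, mul_smul_comm]
  have hlimit : ∑ k with lam k = 0, c k = ∑ k, c k * if lam k = 0 then 1 else 0 := by
    simp only [Finset.sum_filter, mul_boole]
  simp only [hmean, hlimit]
  exact tendsto_finsetSum _ fun k _ => (tendsto_inv_smul_integral_exp_I_mul _).const_mul _

end trigPoly

theorem trig_polynomial_decay_zero_general
    (n : ℕ) (lam : Fin n → ℝ) (hlam : Function.Injective lam)
    (c : Fin n → ℂ)
    (hdecay : ∃ C > (0:ℝ), ∃ Ω > (0:ℝ), ∀ ω ≥ Ω,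
      ‖∑ k, c k * Complex.exp (Complex.I * (lam k : ℂ) * (ω : ℂ))‖ ≤ C / ω) :
    ∀ k, c k = 0 := by
  obtain ⟨C, -, Ω, -, hbound⟩ := hdecay
  have hF : Tendsto (trigPoly lam c) atTop (𝓝 0) :=
    squeeze_zero_norm' ((eventually_ge_atTop Ω).mono hbound)
      (tendsto_const_nhds.div_atTop tendsto_id)
  intro j
  set μ := fun k => lam k - lam j
  have hFμ : Tendsto (trigPoly μ c) atTop (𝓝 0) := by
    rw [tendsto_zero_iff_norm_tendsto_zero] at hF ⊢
    exact hF.congr fun ω => (norm_trigPoly_sub_const lam c (lam j) ω).symm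
  have hzero : Finset.univ.filter (fun k => μ k = 0) = {j} := by
    ext k; simp [μ, sub_eq_zero, hlam.eq_iff]
  have hmean := tendsto_inv_smul_integral_trigPoly μ c
  rw [hzero, Finset.sum_singleton] at hmean
  exact tendsto_nhds_unique hmean
    (isLittleO_integral_of_tendsto_zero (continuous_trigPoly μ c).locallyIntegrable hFμ
      |>.tendsto_inv_smul_nhds_zero)

/-- A trigonometric polynomial F(ω) = Σ_k c_k e^{iλ_k ω} with distinct real
frequencies that decays like C/ω as ω → ∞ is identically zero. -/
theorem trig_polynomial_decay_zero
    (n : ℕ) (hn : 0 < n) (lam : Fin n → ℝ) (hlam : Function.Injective lam)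
    (c : Fin n → ℂ)
    (hdecay : ∃ C > (0:ℝ), ∃ Ω > (0:ℝ), ∀ ω ≥ Ω,
      ‖∑ k, c k * Complex.exp (Complex.I * (lam k : ℂ) * (ω : ℂ))‖ ≤ C / ω) :
    ∀ k, c k = 0 :=
  trig_polynomial_decay_zero_general n lam hlam c hdecay
end

section
/- Let a < b be real numbers, let Z_c : [a,b] → ℝ be positive and twice continuously differentiable, let ω ∈ ℝ, and let V, I : [a,b] → ℂ be differentiable functions satisfying the (Liouville-transformed) Telegrapher's equations V'(x) = iω Z_c(x) I(x) and I'(x) = iω Z_c(x)^{-1} V(x) on [a,b]. Define y(x) = Z_c(x)^{-1/2} V(x) and q(x) = Z_c(x)^{1/2} · (Z_c^{-1/2})''(x). Then y is twice differentiable on [a,b] and satisfies the Schrödinger equation −y''(x) + q(x) y(x) = ω² y(x) for all x ∈ [a,b]. -/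
/-!
Write `y = φ V` with `φ = Z_c^{-1/2}`, so that `Z_c = φ⁻²`. The Telegrapher's equations give
`y' = φ' V + iω φ⁻¹ I`. Differentiating again, the two terms carrying `I` cancel because
`φ' Z_c = φ' φ⁻² = -(φ⁻¹)'`, and `iω φ⁻¹ · I' = -ω² φ V = -ω² y`.
Hence `y'' = φ'' V - ω² y`, while `q y = φ⁻¹ φ'' · φ V = φ'' V`.
-/

section Telegrapher

variable {φ Z : ℝ → ℝ} {V I : ℝ → ℂ} {ω x : ℝ}

theorem hasDerivAt_ofReal_mul_of_telegrapher {φ' : ℝ} (hφ : HasDerivAt φ φ' x)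
    (hZ : φ x ^ 2 * Z x = 1) (hV : HasDerivAt V (Complex.I * ω * Z x * I x) x) :
    HasDerivAt (fun t => (φ t : ℂ) * V t)
      (φ' * V x + Complex.I * ω * ((φ x : ℂ)⁻¹ * I x)) x := by
  have hZC : (φ x : ℂ) ^ 2 * Z x = 1 := by exact_mod_cast hZ
  have hφ0 : (φ x : ℂ) ≠ 0 := by rintro h; simp [h] at hZC
  refine (hφ.ofReal_comp.fun_mul hV).congr_deriv ?_
  field_simp
  linear_combination Complex.I * ω * I x * hZC

theorem hasDerivAt_deriv_ofReal_mul_of_telegrapher {φ' : ℝ → ℝ} {φ'' : ℝ}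
    (hφ : HasDerivAt φ (φ' x) x) (hφ' : HasDerivAt φ' φ'' x) (hZ : φ x ^ 2 * Z x = 1)
    (hV : HasDerivAt V (Complex.I * ω * Z x * I x) x)
    (hI : HasDerivAt I (Complex.I * ω * (Z x : ℂ)⁻¹ * V x) x) :
    HasDerivAt (fun t => (φ' t : ℂ) * V t + Complex.I * ω * ((φ t : ℂ)⁻¹ * I t))
      (φ'' * V x - ω ^ 2 * φ x * V x) x := by
  have hZC : (φ x : ℂ) ^ 2 * Z x = 1 := by exact_mod_cast hZ
  have hφ0 : (φ x : ℂ) ≠ 0 := by rintro h; simp [h] at hZC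
  have hinv : HasDerivAt (fun t => (φ t : ℂ)⁻¹) (-(φ' x : ℂ) / (φ x : ℂ) ^ 2) x :=
    hφ.ofReal_comp.inv hφ0
  refine ((hφ'.ofReal_comp.fun_mul hV).fun_add
    ((hinv.fun_mul hI).const_mul (Complex.I * ω))).congr_deriv ?_
  rw [eq_inv_of_mul_eq_one_right hZC, inv_inv]
  field_simp
  linear_combination V x * ω ^ 2 * (φ x : ℂ) ^ 3 * Complex.I_sq

end Telegrapher

theorem contDiffOn_inv_sqrt {f : ℝ → ℝ} {n : WithTop ℕ∞} (hf : ContDiff ℝ n f) :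
    ContDiffOn ℝ n (fun t => (√(f t))⁻¹) {t | 0 < f t} :=
  (hf.contDiffOn.sqrt fun _ ht => ht.ne').inv fun _ ht => (Real.sqrt_pos.mpr ht).ne'

theorem telegrapher_to_schrodinger_general
    (a b : ℝ) (Zc : ℝ → ℝ) (hZc : ContDiff ℝ 2 Zc)
    (hpos : ∀ x ∈ Set.Icc a b, 0 < Zc x) (ω : ℝ) (V I : ℝ → ℂ)
    (hV : ∀ x ∈ Set.Icc a b,
      HasDerivAt V (Complex.I * (ω : ℂ) * (Zc x : ℂ) * I x) x)
    (hI : ∀ x ∈ Set.Icc a b,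
      HasDerivAt I (Complex.I * (ω : ℂ) * ((Zc x : ℂ))⁻¹ * V x) x)
    (q : ℝ → ℝ)
    (hq : ∀ x, q x = Real.sqrt (Zc x) * deriv (deriv fun t => (Real.sqrt (Zc t))⁻¹) x)
    (y : ℝ → ℂ)
    (hy : ∀ x, y x = ((Real.sqrt (Zc x))⁻¹ : ℝ) * V x) :
    ∃ y' y'' : ℝ → ℂ,
      (∀ x ∈ Set.Icc a b, HasDerivAt y (y' x) x) ∧
      (∀ x ∈ Set.Icc a b, HasDerivAt y' (y'' x) x) ∧
      ∀ x ∈ Set.Icc a b, -y'' x + (q x : ℂ) * y x = (ω : ℂ) ^ 2 * y x := by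
  set φ : ℝ → ℝ := fun t => (√(Zc t))⁻¹
  have hU : IsOpen {t | 0 < Zc t} := isOpen_lt continuous_const hZc.continuous
  have hφ : ∀ x ∈ Set.Icc a b, HasDerivAt φ (deriv φ x) x := fun x hx =>
    ((contDiffOn_inv_sqrt hZc).differentiableOn two_ne_zero x (hpos x hx)
      |>.differentiableAt (hU.mem_nhds (hpos x hx))).hasDerivAt
  have hφ' : ∀ x ∈ Set.Icc a b, HasDerivAt (deriv φ) (deriv (deriv φ) x) x := fun x hx =>
    (((contDiffOn_inv_sqrt hZc).deriv_of_isOpen hU le_rfl).differentiableOn one_ne_zero x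
      (hpos x hx) |>.differentiableAt (hU.mem_nhds (hpos x hx))).hasDerivAt
  have hφZ : ∀ x ∈ Set.Icc a b, φ x ^ 2 * Zc x = 1 := fun x hx => by
    simp only [φ, inv_pow, Real.sq_sqrt (hpos x hx).le, inv_mul_cancel₀ (hpos x hx).ne']
  have hyφ : y = fun t => (φ t : ℂ) * V t := funext hy
  refine ⟨fun t => ((deriv φ t : ℝ) : ℂ) * V t + Complex.I * ω * ((φ t : ℂ)⁻¹ * I t),
    fun t => ((deriv (deriv φ) t : ℝ) : ℂ) * V t - ω ^ 2 * φ t * V t,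
    fun x hx => ?_, fun x hx => ?_, fun x hx => ?_⟩
  · rw [hyφ]
    exact hasDerivAt_ofReal_mul_of_telegrapher (hφ x hx) (hφZ x hx) (hV x hx)
  · exact hasDerivAt_deriv_ofReal_mul_of_telegrapher (hφ x hx) (hφ' x hx) (hφZ x hx) (hV x hx)
      (hI x hx)
  · have hsqrt_φ : ((√(Zc x) : ℝ) : ℂ) * φ x = 1 := by
      exact_mod_cast mul_inv_cancel₀ (Real.sqrt_pos.mpr (hpos x hx)).ne'
    simp only [hq, hyφ, Complex.ofReal_mul]
    linear_combination ((deriv (deriv φ) x : ℝ) : ℂ) * V x * hsqrt_φ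

/-- **Telegrapher to Schrodinger.** If V, I solve the Liouville-transformed
lossless Telegrapher's equations V' = iω Z_c I, I' = iω Z_c⁻¹ V on [a,b], then
y = Z_c^{-1/2} V is twice differentiable on [a,b] and solves −y'' + q y = ω² y with
q = Z_c^{1/2} (Z_c^{-1/2})''. -/
theorem telegrapher_to_schrodinger
    (a b : ℝ) (hab : a < b) (Zc : ℝ → ℝ) (hZc : ContDiff ℝ 2 Zc)
    (hpos : ∀ x ∈ Set.Icc a b, 0 < Zc x) (ω : ℝ) (V I : ℝ → ℂ)
    (hV : ∀ x ∈ Set.Icc a b,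
      HasDerivAt V (Complex.I * (ω : ℂ) * (Zc x : ℂ) * I x) x)
    (hI : ∀ x ∈ Set.Icc a b,
      HasDerivAt I (Complex.I * (ω : ℂ) * ((Zc x : ℂ))⁻¹ * V x) x)
    (q : ℝ → ℝ)
    (hq : ∀ x, q x = Real.sqrt (Zc x) * deriv (deriv fun t => (Real.sqrt (Zc t))⁻¹) x)
    (y : ℝ → ℂ)
    (hy : ∀ x, y x = ((Real.sqrt (Zc x))⁻¹ : ℝ) * V x) :
    ∃ y' y'' : ℝ → ℂ,
      (∀ x ∈ Set.Icc a b, HasDerivAt y (y' x) x) ∧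
      (∀ x ∈ Set.Icc a b, HasDerivAt y' (y'' x) x) ∧
      ∀ x ∈ Set.Icc a b, -y'' x + (q x : ℂ) * y x = (ω : ℂ) ^ 2 * y x :=
  telegrapher_to_schrodinger_general a b Zc hZc hpos ω V I hV hI q hq y hy
end

section
/- Let a < b be real numbers, let Z_c : [a,b] → ℝ be positive and continuously differentiable, let ω ∈ ℝ, and let V, I : [a,b] → ℂ be differentiable functions satisfying V'(x) = iω Z_c(x) I(x) and I'(x) = iω Z_c(x)^{-1} V(x) on [a,b]. Define Q(x) = Z_c'(x)/(2 Z_c(x)) and V_±(x) = (1/2)(V(x) ± Z_c(x) I(x)), and assume V_+(x) ≠ 0 for all x ∈ [a,b]. Then the reflection coefficient R(x) := e^{2iωx} V_-(x)/V_+(x) is differentiable and satisfies the Riccati equation R'(x) − e^{−2iωx} Q(x) R(x)² + Q(x) e^{2iωx} = 0 for all x ∈ [a,b]. -/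
/-!
Writing `V₊ = (V + Z I)/2`, `V₋ = (V - Z I)/2`, the Telegrapher's equations decouple up to the
coupling `Q = Z'/(2Z)`: `V₊' = iω V₊ + Q (V₊ - V₋)` and `V₋' = -iω V₋ - Q (V₊ - V₋)`.
For `R = e^{2iωx} V₋/V₊` the quotient rule then makes the `iω` terms cancel, leaving
`R' = -e^{2iωx} Q (V₊² - V₋²)/V₊² = e^{-2iωx} Q R² - Q e^{2iωx}`.
-/

open Complex

noncomputable section

def forwardWave (Z V I : ℝ → ℂ) (x : ℝ) : ℂ := 1 / 2 * (V x + Z x * I x)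

def backwardWave (Z V I : ℝ → ℂ) (x : ℝ) : ℂ := 1 / 2 * (V x - Z x * I x)

section WaveComponents

variable {Z V I : ℝ → ℂ} {Z' ω : ℂ} {x : ℝ}

theorem hasDerivAt_forwardWave (hZ : HasDerivAt Z Z' x) (hZ0 : Z x ≠ 0)
    (hV : HasDerivAt V (Complex.I * ω * Z x * I x) x)
    (hI : HasDerivAt I (Complex.I * ω * (Z x)⁻¹ * V x) x) :
    HasDerivAt (forwardWave Z V I)
      (Complex.I * ω * forwardWave Z V I x +
        Z' / (2 * Z x) * (forwardWave Z V I x - backwardWave Z V I x)) x := by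
  refine ((hV.add (hZ.mul hI)).const_mul (1 / 2 : ℂ)).congr_deriv ?_
  rw [forwardWave, backwardWave]
  field_simp
  ring

theorem hasDerivAt_backwardWave (hZ : HasDerivAt Z Z' x) (hZ0 : Z x ≠ 0)
    (hV : HasDerivAt V (Complex.I * ω * Z x * I x) x)
    (hI : HasDerivAt I (Complex.I * ω * (Z x)⁻¹ * V x) x) :
    HasDerivAt (backwardWave Z V I)
      (-(Complex.I * ω * backwardWave Z V I x) -
        Z' / (2 * Z x) * (forwardWave Z V I x - backwardWave Z V I x)) x := by
  refine ((hV.sub (hZ.mul hI)).const_mul (1 / 2 : ℂ)).congr_deriv ?_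
  rw [forwardWave, backwardWave]
  field_simp
  ring

end WaveComponents

theorem hasDerivAt_reflection_riccati {p m : ℝ → ℂ} {ω q : ℂ} {x : ℝ}
    (hp : HasDerivAt p (Complex.I * ω * p x + q * (p x - m x)) x)
    (hm : HasDerivAt m (-(Complex.I * ω * m x) - q * (p x - m x)) x) (hp0 : p x ≠ 0) :
    HasDerivAt (fun t : ℝ => exp (2 * Complex.I * ω * t) * m t / p t)
      (exp (-(2 * Complex.I * ω * x)) * q * (exp (2 * Complex.I * ω * x) * m x / p x) ^ 2 -
        q * exp (2 * Complex.I * ω * x)) x := by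
  have hE : HasDerivAt (fun t : ℝ => exp (2 * Complex.I * ω * t))
      (exp (2 * Complex.I * ω * x) * (2 * Complex.I * ω * 1)) x :=
    ((hasDerivAt_id x).ofReal_comp.const_mul _).cexp
  refine ((hE.mul hm).div hp hp0).congr_deriv ?_
  rw [exp_neg, Pi.mul_apply]
  field_simp
  ring

end

theorem riccati_reflection_general
    (a b : ℝ) (Zc : ℝ → ℝ) (hZc : ContDiff ℝ 1 Zc)
    (hpos : ∀ x ∈ Set.Icc a b, 0 < Zc x) (ω : ℝ) (V I : ℝ → ℂ)
    (hV : ∀ x ∈ Set.Icc a b,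
      HasDerivAt V (Complex.I * (ω : ℂ) * (Zc x : ℂ) * I x) x)
    (hI : ∀ x ∈ Set.Icc a b,
      HasDerivAt I (Complex.I * (ω : ℂ) * ((Zc x : ℂ))⁻¹ * V x) x)
    (Q : ℝ → ℝ) (hQ : ∀ x, Q x = deriv Zc x / (2 * Zc x))
    (Vp Vm : ℝ → ℂ)
    (hVp : ∀ x, Vp x = (1 / 2 : ℂ) * (V x + (Zc x : ℂ) * I x))
    (hVm : ∀ x, Vm x = (1 / 2 : ℂ) * (V x - (Zc x : ℂ) * I x))
    (hVp0 : ∀ x ∈ Set.Icc a b, Vp x ≠ 0)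
    (R : ℝ → ℂ)
    (hR : ∀ x, R x = Complex.exp (2 * Complex.I * (ω : ℂ) * (x : ℂ)) * Vm x / Vp x) :
    ∃ R' : ℝ → ℂ,
      (∀ x ∈ Set.Icc a b, HasDerivAt R (R' x) x) ∧
      ∀ x ∈ Set.Icc a b,
        R' x - Complex.exp (-(2 * Complex.I * (ω : ℂ) * (x : ℂ))) * (Q x : ℂ) * (R x) ^ 2 +
          (Q x : ℂ) * Complex.exp (2 * Complex.I * (ω : ℂ) * (x : ℂ)) = 0 := by
  refine ⟨fun x => exp (-(2 * Complex.I * ω * x)) * Q x * R x ^ 2 -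
    Q x * exp (2 * Complex.I * ω * x), fun x hx => ?_, fun x _ => by ring⟩
  have hVp_eq : Vp = forwardWave (fun t => Zc t) V I := funext hVp
  have hVm_eq : Vm = backwardWave (fun t => Zc t) V I := funext hVm
  have hQ_eq : (Q x : ℂ) = ((deriv Zc x : ℝ) : ℂ) / (2 * Zc x) := by rw [hQ]; push_cast; rfl
  have hZ : HasDerivAt (fun t => (Zc t : ℂ)) ((deriv Zc x : ℝ) : ℂ) x :=
    ((hZc.differentiable one_ne_zero) x).hasDerivAt.ofReal_comp
  have hZ0 : (Zc x : ℂ) ≠ 0 := ofReal_ne_zero.mpr (hpos x hx).ne'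
  rw [show R = _ from funext hR]
  beta_reduce
  rw [hVp_eq, hVm_eq, hQ_eq]
  exact hasDerivAt_reflection_riccati (hasDerivAt_forwardWave hZ hZ0 (hV x hx) (hI x hx))
    (hasDerivAt_backwardWave hZ hZ0 (hV x hx) (hI x hx)) (hVp_eq ▸ hVp0 x hx)

/-- **Riccati equation for the reflection coefficient.** The local reflection
coefficient R(x) = e^{2iωx} V_-(x)/V_+(x) of a solution of the Liouville-transformed lossless
Telegrapher's equations satisfies R' − e^{−2iωx} Q R² + Q e^{2iωx} = 0, where
Q = Z_c'/(2 Z_c). -/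
theorem riccati_reflection
    (a b : ℝ) (hab : a < b) (Zc : ℝ → ℝ) (hZc : ContDiff ℝ 1 Zc)
    (hpos : ∀ x ∈ Set.Icc a b, 0 < Zc x) (ω : ℝ) (V I : ℝ → ℂ)
    (hV : ∀ x ∈ Set.Icc a b,
      HasDerivAt V (Complex.I * (ω : ℂ) * (Zc x : ℂ) * I x) x)
    (hI : ∀ x ∈ Set.Icc a b,
      HasDerivAt I (Complex.I * (ω : ℂ) * ((Zc x : ℂ))⁻¹ * V x) x)
    (Q : ℝ → ℝ) (hQ : ∀ x, Q x = deriv Zc x / (2 * Zc x))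
    (Vp Vm : ℝ → ℂ)
    (hVp : ∀ x, Vp x = (1 / 2 : ℂ) * (V x + (Zc x : ℂ) * I x))
    (hVm : ∀ x, Vm x = (1 / 2 : ℂ) * (V x - (Zc x : ℂ) * I x))
    (hVp0 : ∀ x ∈ Set.Icc a b, Vp x ≠ 0)
    (R : ℝ → ℂ)
    (hR : ∀ x, R x = Complex.exp (2 * Complex.I * (ω : ℂ) * (x : ℂ)) * Vm x / Vp x) :
    ∃ R' : ℝ → ℂ,
      (∀ x ∈ Set.Icc a b, HasDerivAt R (R' x) x) ∧
      ∀ x ∈ Set.Icc a b,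
        R' x - Complex.exp (-(2 * Complex.I * (ω : ℂ) * (x : ℂ))) * (Q x : ℂ) * (R x) ^ 2 +
          (Q x : ℂ) * Complex.exp (2 * Complex.I * (ω : ℂ) * (x : ℂ)) = 0 :=
  riccati_reflection_general a b Zc hZc hpos ω V I hV hI Q hQ Vp Vm hVp hVm hVp0 R hR
end
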